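/- arXiv:2001.02981 — 2 statements merged into one kernel-verified Lean document; each statement's English description precedes it below -/
import Mathlib

section
/- For the floating-point sum error bound e_+(r1,e1,r2,e2) := e1 + e2 + (1/2)·ulp(|r1+r2| + e1 + e2): if |R(ṽ1) - r1| ≤ e1 and |R(ṽ2) - r2| ≤ e2, then |R(ṽ1 ⊕ ṽ2) - (r1 + r2)| ≤ e_+(r1,e1,r2,e2), where ⊕ denotes floating-point addition defined as ṽ1 ⊕ ṽ2 = round(R(ṽ1) + R(ṽ2)). -/
/-- Error bound for floating-point addition: with `⊕` defined as
`round (R v1 + R v2)`, if the arguments carry errors `e1`, `e2` with respect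
to real values `r1`, `r2`, then the sum's error is bounded by
`e1 + e2 + (1/2) * ulp (|r1 + r2| + e1 + e2)`. -/
theorem fp_add_error_bound
    (F : Type) (R : F → ℝ) (round : ℝ → F) (ulp : ℝ → ℝ)
    (hulp_nonneg : ∀ x : ℝ, 0 ≤ ulp x)
    (hulp_mono : ∀ x y : ℝ, |x| ≤ |y| → ulp x ≤ ulp y)
    (hround : ∀ x : ℝ, |R (round x) - x| ≤ (1 / 2) * ulp x)
    (v1 v2 : F) (r1 r2 e1 e2 : ℝ)
    (h1 : |R v1 - r1| ≤ e1) (h2 : |R v2 - r2| ≤ e2) :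
    |R (round (R v1 + R v2)) - (r1 + r2)| ≤
      e1 + e2 + (1 / 2) * ulp (|r1 + r2| + e1 + e2) := by
  set s := R v1 + R v2 with hs
  have he1 : (0:ℝ) ≤ e1 := le_trans (abs_nonneg _) h1
  have he2 : (0:ℝ) ≤ e2 := le_trans (abs_nonneg _) h2
  have hdist : |s - (r1 + r2)| ≤ e1 + e2 := by
    have : s - (r1 + r2) = (R v1 - r1) + (R v2 - r2) := by ring
    rw [this]
    exact (abs_add_le _ _).trans (add_le_add h1 h2)
  have hsle : |s| ≤ |r1 + r2| + e1 + e2 := by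
    have := abs_sub_abs_le_abs_sub s (r1 + r2)
    linarith
  have hulp : ulp s ≤ ulp (|r1 + r2| + e1 + e2) := by
    have h0 : (0:ℝ) ≤ |r1 + r2| + e1 + e2 := by positivity
    exact hulp_mono _ _ (by rwa [abs_of_nonneg h0])
  calc |R (round s) - (r1 + r2)|
      ≤ |R (round s) - s| + |s - (r1 + r2)| := abs_sub_le _ _ _
    _ ≤ (1/2) * ulp s + (e1 + e2) := add_le_add (hround s) hdist
    _ ≤ e1 + e2 + (1/2) * ulp (|r1 + r2| + e1 + e2) := by linarith
end

section
/- Transformed binary conditional correctness (stable output): let φ̃, φ be the floating-point and real guards with sound abstractions β⁺, β⁻ (β⁺ → φ̃ ∧ φ and β⁻ → ¬φ̃ ∧ ¬φ), and let f̃₁, f̃₂, f₁, f₂ be reals with |f̃₁ - f₁| ≤ e₁ and |f̃₂ - f₂| ≤ e₂. Define the transformed result r as f̃₁ if β⁺ holds, f̃₂ if (¬β⁺ and β⁻) holds, and a warning otherwise; define the real result R as f₁ if φ holds and f₂ otherwise. If r is not a warning, then |r - R| ≤ max(e₁, e₂). -/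
open Classical in
/-- Transformed binary conditional correctness (stable output): if the
transformed program does not emit a warning, its output differs from the
real-valued result by at most `max e1 e2`. -/
theorem transformed_ite_stable_output
    (bp bm phit phi : Prop)
    (f1t f2t f1 f2 e1 e2 : ℝ)
    (he1 : 0 ≤ e1) (he2 : 0 ≤ e2)
    (hp : bp → phit ∧ phi) (hm : bm → ¬phit ∧ ¬phi)
    (h1 : |f1t - f1| ≤ e1) (h2 : |f2t - f2| ≤ e2)
    (r : Option ℝ)
    (hr : r = if bp then some f1t else if ¬bp ∧ bm then some f2t else none)
    (R : ℝ) (hR : R = if phi then f1 else f2)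
    (v : ℝ) (hv : r = some v) :
    |v - R| ≤ max e1 e2 := by
  subst hr hR
  by_cases hbp : bp
  · simp [hbp, (hp hbp).2] at hv ⊢
    subst hv; exact Or.inl h1
  · by_cases hbm : bm
    · simp [hbp, hbm, (hm hbm).2] at hv ⊢
      subst hv; exact Or.inr h2
    · simp [hbp, hbm] at hv
end
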